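/- arXiv:1904.08489 — 2 statements merged into one kernel-verified Lean document; each statement's English description precedes it below -/
import Mathlib

section
/- Robust classification error bound for subspace attacks: Consider data (x, y) where y ∈ {±1} is uniform and x = y·θ* + σg with g ~ N(0, I_d), θ* ∈ ℝ^d, σ > 0. Let ŵ ∈ ℝ^d be a unit vector, U ∈ ℝ^{d×k} have orthonormal columns, and ε > 0. Define the attack set S_ε(x) = {x̃ : x̃ = x + UU^T δ for some δ ∈ ℝ^d, ‖x̃ − x‖∞ ≤ ε} and the robust classification error β = P(∃ x̃ ∈ S_ε(x) : sign(⟨ŵ, x̃⟩) ≠ y). If ⟨ŵ, θ*⟩ ≥ k·‖U‖_{∞,1}·‖ŵ^T U‖∞·ε, then β ≤ exp(−(⟨ŵ, θ*⟩ − k·‖U‖_{∞,1}·‖ŵ^T U‖∞·ε)² / (2σ²)). -/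
/-!
With `x = yθ* + σg` and `x̃ = x + p`, `p = UUᵀδ`, the relation `UᵀU = 1` gives
`⟨ŵ, p⟩ = ⟨Uᵀŵ, Uᵀp⟩`, so Hölder's inequality and the definition of `‖U‖_{∞,1}` bound the
attacker's gain `|⟨ŵ, p⟩|` by `M = k ‖U‖_{∞,1} ‖Uᵀŵ‖_∞ ε`. A successful attack therefore forces
`-yσ⟨ŵ, g⟩ ≥ ⟨ŵ, θ*⟩ - M`. For each of the two values `y = ±1` the left side is a sum of
independent centred Gaussians of total variance `σ²`, hence sub-Gaussian, and the Chernoff bound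
gives the tail `exp (-(⟨ŵ, θ*⟩ - M)² / (2σ²))`; integrating over `y` (Fubini) keeps this bound.
-/

open Matrix MeasureTheory ProbabilityTheory
open scoped ENNReal

/-- The `(∞,1)` operator norm `‖U‖_{∞,1} = sup { ‖Uᵀ v‖₁ : ‖v‖∞ ≤ 1 }`. -/
noncomputable def opNormInfOne {d k : ℕ} (U : Matrix (Fin d) (Fin k) ℝ) : ℝ :=
  sSup {r : ℝ | ∃ v : Fin d → ℝ, ‖v‖ ≤ 1 ∧ r = ∑ j, |Uᵀ.mulVec v j|}

lemma abs_dotProduct_le_norm_mul_sum_abs {ι : Type*} [Fintype ι] (a b : ι → ℝ) :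
    |a ⬝ᵥ b| ≤ ‖a‖ * ∑ i, |b i| := by
  rw [Finset.mul_sum]
  refine (Finset.abs_sum_le_sum_abs _ _).trans (Finset.sum_le_sum fun i _ ↦ ?_)
  rw [abs_mul]
  exact mul_le_mul_of_nonneg_right (norm_le_pi_norm a i) (abs_nonneg _)

lemma norm_le_card_mul_norm {ι E : Type*} [Fintype ι] [SeminormedAddCommGroup E]
    (v : ι → E) : ‖v‖ ≤ Fintype.card ι * ‖v‖ := by
  cases isEmpty_or_nonempty ι
  · simp [Subsingleton.elim v 0]
  · exact le_mul_of_one_le_left (norm_nonneg v) (mod_cast Fintype.card_pos)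

section OpNormInfOne

variable {d k : ℕ} (U : Matrix (Fin d) (Fin k) ℝ)

lemma bddAbove_sum_abs_mulVec_transpose :
    BddAbove {r : ℝ | ∃ v : Fin d → ℝ, ‖v‖ ≤ 1 ∧ r = ∑ j, |Uᵀ.mulVec v j|} := by
  refine ⟨∑ j, ∑ i, |U i j|, ?_⟩
  rintro _ ⟨v, hv, rfl⟩
  refine Finset.sum_le_sum fun j _ ↦ ?_
  have := abs_dotProduct_le_norm_mul_sum_abs v (fun i ↦ U i j)
  rw [dotProduct_comm] at this
  exact this.trans (mul_le_of_le_one_left (by positivity) hv)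

lemma sum_abs_mulVec_transpose_le_opNormInfOne {v : Fin d → ℝ} (hv : ‖v‖ ≤ 1) :
    ∑ j, |Uᵀ.mulVec v j| ≤ opNormInfOne U :=
  le_csSup (bddAbove_sum_abs_mulVec_transpose U) ⟨v, hv, rfl⟩

lemma opNormInfOne_nonneg : 0 ≤ opNormInfOne U :=
  (Finset.sum_nonneg fun _ _ ↦ abs_nonneg _).trans
    (sum_abs_mulVec_transpose_le_opNormInfOne U (v := 0) (by simp))

lemma sum_abs_mulVec_transpose_le_opNormInfOne_mul_norm (v : Fin d → ℝ) :
    ∑ j, |Uᵀ.mulVec v j| ≤ opNormInfOne U * ‖v‖ := by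
  rcases eq_or_ne v 0 with rfl | hv
  · simp
  have hv' : 0 < ‖v‖ := norm_pos_iff.mpr hv
  have := sum_abs_mulVec_transpose_le_opNormInfOne U (v := ‖v‖⁻¹ • v)
    (by rw [norm_smul, norm_inv, norm_norm, inv_mul_cancel₀ hv'.ne'])
  simp only [mulVec_smul, Pi.smul_apply, smul_eq_mul, abs_mul, abs_inv, abs_norm,
    ← Finset.mul_sum] at this
  rwa [inv_mul_le_iff₀ hv', mul_comm] at this

end OpNormInfOne

lemma abs_dotProduct_projection_le {d k : ℕ} {U : Matrix (Fin d) (Fin k) ℝ}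
    (hU : Uᵀ * U = 1) (w δ : Fin d → ℝ) :
    |w ⬝ᵥ U *ᵥ (Uᵀ *ᵥ δ)| ≤ k * opNormInfOne U * ‖Uᵀ *ᵥ w‖ * ‖U *ᵥ (Uᵀ *ᵥ δ)‖ := by
  set p := U *ᵥ (Uᵀ *ᵥ δ)
  -- `Uᵀ p = Uᵀ δ` because `UᵀU = 1`, so `⟨w, p⟩ = ⟨w, U Uᵀ p⟩ = ⟨Uᵀ w, Uᵀ p⟩`.
  have hp : w ⬝ᵥ p = (Uᵀ *ᵥ w) ⬝ᵥ (Uᵀ *ᵥ p) := by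
    rw [mulVec_mulVec, hU, one_mulVec, dotProduct_mulVec, ← mulVec_transpose]
  calc |w ⬝ᵥ p| ≤ ‖Uᵀ *ᵥ w‖ * (opNormInfOne U * ‖p‖) := by
        rw [hp]
        exact (abs_dotProduct_le_norm_mul_sum_abs _ _).trans <| mul_le_mul_of_nonneg_left
          (sum_abs_mulVec_transpose_le_opNormInfOne_mul_norm U p) (norm_nonneg _)
    _ ≤ k * ‖Uᵀ *ᵥ w‖ * (opNormInfOne U * ‖p‖) := by
        have := norm_le_card_mul_norm (Uᵀ *ᵥ w)
        rw [Fintype.card_fin] at this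
        gcongr
        exact mul_nonneg (opNormInfOne_nonneg U) (norm_nonneg p)
    _ = k * opNormInfOne U * ‖Uᵀ *ᵥ w‖ * ‖p‖ := by ring

lemma margin_sub_le_of_misclassified {d k : ℕ} {U : Matrix (Fin d) (Fin k) ℝ}
    (hU : Uᵀ * U = 1) {y σ ε : ℝ} (hy : y ^ 2 = 1) {θ g w xt : Fin d → ℝ}
    (hxt : ∃ δ, xt = (fun i ↦ y * θ i + σ * g i) + U *ᵥ (Uᵀ *ᵥ δ))
    (hε : ‖xt - fun i ↦ y * θ i + σ * g i‖ ≤ ε) (hmis : y * ∑ i, w i * xt i ≤ 0) :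
    ∑ i, w i * θ i - k * opNormInfOne U * ‖Uᵀ *ᵥ w‖ * ε ≤ ∑ i, -y * σ * w i * g i := by
  obtain ⟨δ, rfl⟩ := hxt
  set p := U *ᵥ (Uᵀ *ᵥ δ)
  have hp : |w ⬝ᵥ p| ≤ k * opNormInfOne U * ‖Uᵀ *ᵥ w‖ * ε := by
    refine (abs_dotProduct_projection_le hU w δ).trans ?_
    rw [add_sub_cancel_left] at hε
    gcongr
    exact mul_nonneg (mul_nonneg (Nat.cast_nonneg k) (opNormInfOne_nonneg U)) (norm_nonneg _)
  have hy_abs : |y| = 1 :=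
    (pow_eq_one_iff_of_nonneg (abs_nonneg y) two_ne_zero).1 (by rw [sq_abs, hy])
  have hsplit : y * ∑ i, w i * ((fun i ↦ y * θ i + σ * g i) + p) i =
      ∑ i, w i * θ i + y * (w ⬝ᵥ p) - ∑ i, -y * σ * w i * g i := by
    simp only [Pi.add_apply, dotProduct, Finset.mul_sum, ← Finset.sum_add_distrib,
      ← Finset.sum_sub_distrib]
    refine Finset.sum_congr rfl fun i _ ↦ ?_
    linear_combination (w i * θ i) * hy
  have := neg_abs_le (y * (w ⬝ᵥ p))
  rw [abs_mul, hy_abs, one_mul] at this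
  linarith

lemma hasSubgaussianMGF_const_mul_gaussianReal (a : ℝ) :
    HasSubgaussianMGF (fun x ↦ a * x) (.mk (a ^ 2) (sq_nonneg a)) (gaussianReal 0 1) := by
  rw [← HasSubgaussianMGF.id_map_iff (by fun_prop), gaussianReal_map_const_mul]
  refine ⟨integrable_exp_mul_gaussianReal, fun t ↦ ?_⟩
  simp [mgf_id_gaussianReal]

lemma pi_gaussianReal_measureReal_sum_mul_ge_le {ι : Type*} [Fintype ι] (a : ι → ℝ)
    {s : ℝ} (hs : 0 ≤ s) :
    (Measure.pi fun _ : ι ↦ gaussianReal 0 1).real {g | s ≤ ∑ i, a i * g i} ≤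
      Real.exp (-s ^ 2 / (2 * ∑ i, a i ^ 2)) := by
  have h_indep := iIndepFun_pi (μ := fun _ : ι ↦ gaussianReal 0 1)
    (X := fun i x ↦ a i * x) fun _ ↦ by fun_prop
  have h := HasSubgaussianMGF.measure_sum_ge_le_of_iIndepFun h_indep (s := Finset.univ)
    (fun i _ ↦ .of_map (measurable_pi_apply i).aemeasurable (by
      rw [(measurePreserving_eval _ i).map_eq]
      exact hasSubgaussianMGF_const_mul_gaussianReal (a i))) hs
  simpa using h

lemma measureReal_prod_le_of_ae_measureReal_le {α β : Type*} [MeasurableSpace α]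
    [MeasurableSpace β] {μ : Measure α} {ν : Measure β} [IsProbabilityMeasure μ]
    [IsFiniteMeasure ν] {s : Set (α × β)} (hs : MeasurableSet s) {b : ℝ} (hb : 0 ≤ b)
    (h : ∀ᵐ x ∂μ, ν.real (Prod.mk x ⁻¹' s) ≤ b) : (μ.prod ν).real s ≤ b := by
  refine ENNReal.toReal_le_of_le_ofReal hb ?_
  calc μ.prod ν s = ∫⁻ x, ν (Prod.mk x ⁻¹' s) ∂μ := Measure.prod_apply hs
    _ ≤ ∫⁻ _, ENNReal.ofReal b ∂μ := lintegral_mono_ae <| h.mono fun x hx ↦ by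
        rwa [← ofReal_measureReal, ENNReal.ofReal_le_ofReal_iff hb]
    _ = ENNReal.ofReal b := by simp

lemma isProbabilityMeasure_half_dirac_add_half_dirac {α : Type*} [MeasurableSpace α]
    (a b : α) :
    IsProbabilityMeasure ((1/2 : ℝ≥0∞) • Measure.dirac a + (1/2 : ℝ≥0∞) • Measure.dirac b) :=
  ⟨by simp [ENNReal.inv_two_add_inv_two]⟩

lemma ae_half_dirac_add_half_dirac {α : Type*} [MeasurableSpace α]
    [MeasurableSingletonClass α] {a b : α} {q : α → Prop} (ha : q a) (hb : q b) :
    ∀ᵐ x ∂((1/2 : ℝ≥0∞) • Measure.dirac a + (1/2 : ℝ≥0∞) • Measure.dirac b), q x := by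
  simp [ae_add_measure_iff, ha, hb]

theorem robust_error_subspace_attack_general {d k : ℕ} {Ω : Type*} [MeasurableSpace Ω]
    (P : Measure Ω) [IsProbabilityMeasure P]
    (Y : Ω → ℝ) (G : Ω → Fin d → ℝ)
    (hlaw : Measure.map (fun ω => (Y ω, G ω)) P =
      ((1/2 : ℝ≥0∞) • Measure.dirac (1 : ℝ) +
        (1/2 : ℝ≥0∞) • Measure.dirac (-1 : ℝ)).prod
        (Measure.pi (fun _ : Fin d => gaussianReal 0 1)))
    (θ : Fin d → ℝ) (σ : ℝ)
    (w : Fin d → ℝ) (hw : ∑ i, w i ^ 2 = 1)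
    (U : Matrix (Fin d) (Fin k) ℝ) (hU : Uᵀ * U = 1)
    (ε : ℝ)
    (hmargin : (k : ℝ) * opNormInfOne U * ‖Uᵀ.mulVec w‖ * ε ≤ ∑ i, w i * θ i) :
    (P {ω | ∃ xt : Fin d → ℝ,
        (∃ δ : Fin d → ℝ,
          xt = (fun i => Y ω * θ i + σ * G ω i) + U.mulVec (Uᵀ.mulVec δ)) ∧
        ‖xt - (fun i => Y ω * θ i + σ * G ω i)‖ ≤ ε ∧
        Y ω * ∑ i, w i * xt i ≤ 0}).toReal ≤
      Real.exp (-((∑ i, w i * θ i) -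
        (k : ℝ) * opNormInfOne U * ‖Uᵀ.mulVec w‖ * ε) ^ 2 / (2 * σ ^ 2)) := by
  set s := ∑ i, w i * θ i - k * opNormInfOne U * ‖Uᵀ *ᵥ w‖ * ε
  set S : Set (ℝ × (Fin d → ℝ)) := {p | p.1 ^ 2 = 1 → s ≤ ∑ i, -p.1 * σ * w i * p.2 i}
  have hS : MeasurableSet S := by
    simp only [S, imp_iff_not_or, Set.ofPred_or]
    exact (measurableSet_eq_fun (by fun_prop) measurable_const).compl.union
      (measurableSet_le measurable_const (by fun_prop))
  have := isProbabilityMeasure_half_dirac_add_half_dirac (1 : ℝ) (-1)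
  have hYG : AEMeasurable (fun ω ↦ (Y ω, G ω)) P :=
    .of_map_ne_zero (by rw [hlaw]; exact IsProbabilityMeasure.ne_zero _)
  have hsection (y : ℝ) (hy : y ^ 2 = 1) :
      (Measure.pi fun _ : Fin d ↦ gaussianReal 0 1).real (Prod.mk y ⁻¹' S) ≤
        Real.exp (-s ^ 2 / (2 * σ ^ 2)) := by
    convert pi_gaussianReal_measureReal_sum_mul_ge_le (fun i ↦ -y * σ * w i)
      (sub_nonneg.2 hmargin) using 3
    · ext g; simp only [S, Set.mem_preimage, Set.mem_ofPred_eq, hy, true_imp_iff]; rfl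
    · simp_rw [mul_pow, neg_sq, hy, one_mul, ← Finset.mul_sum, hw, mul_one]
  calc _ ≤ P.real ((fun ω ↦ (Y ω, G ω)) ⁻¹' S) := measureReal_mono <| by
        rintro ω ⟨_, hxt, hε, hmis⟩ hy
        exact margin_sub_le_of_misclassified hU hy hxt hε hmis
    _ = _ := by rw [← map_measureReal_apply_of_aemeasurable hYG hS, hlaw]
    _ ≤ _ := measureReal_prod_le_of_ae_measureReal_le hS (Real.exp_nonneg _)
        ((ae_half_dirac_add_half_dirac (q := fun y : ℝ ↦ y ^ 2 = 1) (by norm_num)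
          (by norm_num)).mono hsection)

/-- Robust classification error bound for subspace attacks: `y` uniform on `{±1}`,
`x = y·θ* + σg` with `g ~ N(0, I_d)`, `ŵ` a unit vector, `U` with orthonormal
columns.  If the margin condition holds, the robust error is at most the stated
Gaussian tail. -/
theorem robust_error_subspace_attack {d k : ℕ} {Ω : Type*} [MeasurableSpace Ω]
    (P : Measure Ω) [IsProbabilityMeasure P]
    (Y : Ω → ℝ) (G : Ω → Fin d → ℝ)
    (hlaw : Measure.map (fun ω => (Y ω, G ω)) P =
      ((1/2 : ℝ≥0∞) • Measure.dirac (1 : ℝ) +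
        (1/2 : ℝ≥0∞) • Measure.dirac (-1 : ℝ)).prod
        (Measure.pi (fun _ : Fin d => gaussianReal 0 1)))
    (θ : Fin d → ℝ) (σ : ℝ) (hσ : 0 < σ)
    (w : Fin d → ℝ) (hw : ∑ i, w i ^ 2 = 1)
    (U : Matrix (Fin d) (Fin k) ℝ) (hU : Uᵀ * U = 1)
    (ε : ℝ) (hε : 0 < ε)
    (hmargin : (k : ℝ) * opNormInfOne U * ‖Uᵀ.mulVec w‖ * ε ≤ ∑ i, w i * θ i) :
    (P {ω | ∃ xt : Fin d → ℝ,
        (∃ δ : Fin d → ℝ,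
          xt = (fun i => Y ω * θ i + σ * G ω i) + U.mulVec (Uᵀ.mulVec δ)) ∧
        ‖xt - (fun i => Y ω * θ i + σ * G ω i)‖ ≤ ε ∧
        Y ω * ∑ i, w i * xt i ≤ 0}).toReal ≤
      Real.exp (-((∑ i, w i * θ i) -
        (k : ℝ) * opNormInfOne U * ‖Uᵀ.mulVec w‖ * ε) ^ 2 / (2 * σ ^ 2)) :=
  robust_error_subspace_attack_general P Y G hlaw θ σ w hw U hU ε hmargin
end

section
/- Existence of adversarial perturbation under small margin: Let ŵ ∈ ℝ^d, U ∈ ℝ^{d×k} with orthonormal columns and U^T ŵ ≠ 0, ε > 0, y ∈ {±1}, and x ∈ ℝ^d, and let ‖U‖_{op,∞} = sup{‖Uδ'‖∞ : ‖δ'‖∞ ≤ 1}. If ⟨y·x, ŵ⟩ < ε·‖U^T ŵ‖₁ / ‖U‖_{op,∞}, then there exists δ' ∈ ℝ^k with ‖Uδ'‖∞ ≤ ε and ⟨y(x + Uδ'), ŵ⟩ < 0. -/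
open Matrix

/-- The `(∞→∞)` operator norm `sup { ‖Uδ'‖∞ : ‖δ'‖∞ ≤ 1 }`. -/
noncomputable def opNormInfInf {d k : ℕ} (U : Matrix (Fin d) (Fin k) ℝ) : ℝ :=
  sSup {r : ℝ | ∃ δ' : Fin k → ℝ, ‖δ'‖ ≤ 1 ∧ r = ‖U.mulVec δ'‖}

private lemma sign_mul_self' (t : ℝ) : Real.sign t * t = |t| := by
  rcases lt_trichotomy t 0 with h | h | h
  · rw [Real.sign_of_neg h, abs_of_neg h]; ring
  · simp [h]
  · rw [Real.sign_of_pos h, abs_of_pos h]; ring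

/-- Existence of an adversarial subspace perturbation under a small margin. -/
theorem exists_adv_of_small_margin {d k : ℕ} (U : Matrix (Fin d) (Fin k) ℝ)
    (hU : Uᵀ * U = 1) (w : Fin d → ℝ) (hUw : Uᵀ.mulVec w ≠ 0)
    (ε : ℝ) (hε : 0 < ε) (y : ℝ) (hy : y = 1 ∨ y = -1) (x : Fin d → ℝ)
    (hmargin : ∑ i, y * x i * w i <
      ε * (∑ j, |Uᵀ.mulVec w j|) / opNormInfInf U) :
    ∃ δ' : Fin k → ℝ, ‖U.mulVec δ'‖ ≤ ε ∧
      ∑ i, y * (x i + U.mulVec δ' i) * w i < 0 := by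
  classical
  set S := {r : ℝ | ∃ δ' : Fin k → ℝ, ‖δ'‖ ≤ 1 ∧ r = ‖U.mulVec δ'‖} with hS
  set N := opNormInfInf U with hNdef
  set f := LinearMap.toContinuousLinearMap (Matrix.mulVecLin U) with hf
  have hbdd : BddAbove S := by
    refine ⟨‖f‖, ?_⟩
    rintro r ⟨δ', hδ, rfl⟩
    have h1 : ‖U.mulVec δ'‖ = ‖f δ'‖ := rfl
    have h2 := f.le_opNorm δ'
    have h3 : ‖f‖ * ‖δ'‖ ≤ ‖f‖ * 1 := by
      exact mul_le_mul_of_nonneg_left hδ (norm_nonneg f)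
    simpa [h1] using h2.trans (by simpa using h3)
  obtain ⟨j0, hj0⟩ : ∃ j, Uᵀ.mulVec w j ≠ 0 := Function.ne_iff.mp hUw
  have hk : Nonempty (Fin k) := ⟨j0⟩
  -- N > 0
  have hcol : ∑ i, U i j0 * U i j0 = 1 := by
    have := congrFun (congrFun hU j0) j0
    simpa [Matrix.mul_apply, Matrix.one_apply, Matrix.transpose_apply] using this
  have hcolne : ∃ i, U i j0 ≠ 0 := by
    by_contra h
    push_neg at h
    simp [h] at hcol
  obtain ⟨i0, hi0⟩ := hcolne
  have hmemS : ‖U.mulVec (Pi.single j0 (1:ℝ))‖ ∈ S := by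
    refine ⟨Pi.single j0 1, ?_, rfl⟩
    rw [Pi.norm_single]; simp
  have hsingle : U.mulVec (Pi.single j0 (1:ℝ)) i0 = U i0 j0 := by
    simp [Matrix.mulVec, dotProduct, Pi.single_apply]
  have hpos : 0 < ‖U.mulVec (Pi.single j0 (1:ℝ))‖ := by
    have h1 : |U.mulVec (Pi.single j0 (1:ℝ)) i0| ≤ ‖U.mulVec (Pi.single j0 (1:ℝ))‖ := by
      simpa using norm_le_pi_norm (U.mulVec (Pi.single j0 (1:ℝ))) i0
    have : 0 < |U.mulVec (Pi.single j0 (1:ℝ)) i0| := by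
      rw [hsingle]; exact abs_pos.mpr hi0
    linarith
  have hNpos : 0 < N := lt_of_lt_of_le hpos (le_csSup hbdd hmemS)
  -- construction
  set t := Uᵀ.mulVec w with ht
  set ρ := ε / N with hρ
  have hρpos : 0 < ρ := div_pos hε hNpos
  have hy2 : y * y = 1 := by rcases hy with h | h <;> simp [h]
  have hyabs : |y| = 1 := by rcases hy with h | h <;> simp [h]
  set δ₀ : Fin k → ℝ := fun j => -(y * Real.sign (t j)) with hδ₀
  have hδ₀norm : ‖δ₀‖ ≤ 1 := by
    rw [pi_norm_le_iff_of_nonneg zero_le_one]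
    intro j
    have : |Real.sign (t j)| ≤ 1 := by
      rcases lt_trichotomy (t j) 0 with h | h | h
      · simp [Real.sign_of_neg h]
      · simp [h]
      · simp [Real.sign_of_pos h]
    simp only [hδ₀, Real.norm_eq_abs, abs_neg, abs_mul, hyabs, one_mul]
    exact this
  refine ⟨ρ • δ₀, ?_, ?_⟩
  · rw [Matrix.mulVec_smul, norm_smul]
    have h1 : ‖U.mulVec δ₀‖ ≤ N := le_csSup hbdd ⟨δ₀, hδ₀norm, rfl⟩
    have : ‖ρ‖ = ρ := by rw [Real.norm_eq_abs, abs_of_pos hρpos]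
    rw [this]
    calc ρ * ‖U.mulVec δ₀‖ ≤ ρ * N := by
          exact mul_le_mul_of_nonneg_left h1 hρpos.le
      _ = ε := div_mul_cancel₀ ε hNpos.ne'
  · have hswap : ∑ i, U.mulVec (ρ • δ₀) i * w i = ∑ j, (ρ • δ₀) j * t j := by
      simp only [Matrix.mulVec, dotProduct, ht, Matrix.transpose_apply,
        Finset.sum_mul, Finset.mul_sum]
      rw [Finset.sum_comm]
      apply Finset.sum_congr rfl
      intro j _
      apply Finset.sum_congr rfl
      intro i _
      ring
    have hterm : ∀ j, (ρ • δ₀) j * t j = -(y * (ρ * |t j|)) := by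
      intro j
      have h := sign_mul_self' (t j)
      simp only [Pi.smul_apply, smul_eq_mul, hδ₀]
      linear_combination (-(y * ρ)) * h
    have hval : ∑ j, (ρ • δ₀) j * t j = -(y * (ρ * ∑ j, |t j|)) := by
      calc ∑ j, (ρ • δ₀) j * t j = ∑ j, -(y * (ρ * |t j|)) :=
            Finset.sum_congr rfl fun j _ => hterm j
        _ = -(y * (ρ * ∑ j, |t j|)) := by
            rw [Finset.sum_neg_distrib, ← Finset.mul_sum, ← Finset.mul_sum]
    have hexp : ∑ i, y * (x i + U.mulVec (ρ • δ₀) i) * w i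
        = (∑ i, y * x i * w i) + y * ∑ i, U.mulVec (ρ • δ₀) i * w i := by
      rw [Finset.mul_sum, ← Finset.sum_add_distrib]
      apply Finset.sum_congr rfl
      intro i _
      ring
    rw [hexp, hswap, hval]
    have hmargin' : ∑ i, y * x i * w i < ρ * ∑ j, |t j| := by
      have : ε * (∑ j, |t j|) / N = ρ * ∑ j, |t j| := by
        rw [hρ]; ring
      rw [← this]
      exact hmargin
    have hyy : y * -(y * (ρ * ∑ j, |t j|)) = -(ρ * ∑ j, |t j|) := by
      linear_combination (-(ρ * ∑ j, |t j|)) * hy2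
    rw [hyy]
    linarith
end
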